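/- Let κ be inaccessible, λ < κ uncountable, and f : κ → κ. Define, for α < κ, J_f^α = {η ∈ J_f : rang(η) ⊂ λ × β^4 for some β < α}, where J_f is the coloured tree of Definition 2.6. Then the family (J_f^α)_{α<κ} is a filtration of J_f: each J_f^α is downward closed, the union over α < κ is J_f, the family is increasing, continuous at limit ordinals, and each J_f^α has cardinality less than κ. -/

import Mathlib

open Cardinal Set

/-- A 5-tuple of ordinals, the value of a node of `J_f` at a point of its domain. -/
abbrev Tup5 := Ordinal.{0} × Ordinal.{0} × Ordinal.{0} × Ordinal.{0} × Ordinal.{0}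

/-- Nodes of `J_f`: partial functions `η : s → λ × κ⁴` (`s ≤ λ`), coded as
`Option`-valued functions on ordinals. -/
abbrev Node := Ordinal.{0} → Option Tup5

/-- A good node: its domain is an initial segment `Iio s` with `s ≤ λ`, its first
coordinate takes values below `λ` and the remaining four below `κ`. -/
def IsGoodNode (κ lam : Cardinal.{0}) (η : Node) : Prop :=
  (∃ s ≤ lam.ord, ∀ i, (η i).isSome = true ↔ i < s) ∧
  ∀ i v, η i = some v → v.1 < lam.ord ∧ v.2.1 < κ.ord ∧ v.2.2.1 < κ.ord ∧
    v.2.2.2.1 < κ.ord ∧ v.2.2.2.2 < κ.ord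

/-- Restriction `η ↾ s` of a node. -/
noncomputable def restrictNode (η : Node) (s : Ordinal) : Node := fun i => if i < s then η i else none

/-- `J_f^α = {η ∈ J_f | rang(η) ⊂ λ × β⁴ for some β < α}`. -/
def levelSet (J : Set Node) (α : Ordinal) : Set Node :=
  {η ∈ J | ∃ β < α, ∀ i v, η i = some v →
    v.2.1 < β ∧ v.2.2.1 < β ∧ v.2.2.2.1 < β ∧ v.2.2.2.2 < β}

/-!
The levels increase and are continuous at limits because the bound `β < α` in the definition
of `J^α` is strict. A node is a sequence of length at most `λ < κ` with values below `κ`, so by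
regularity of `κ` its values are bounded below `κ`, which places it in some level. A node of
`J^α` is determined by its graph, a subset of `λ × (λ × α⁴)`, hence `|J^α| ≤ 2^(λ·|α|⁴) < κ`
because `κ` is a strong limit.
-/

universe u

open Order

noncomputable def Tup5.tailSup (v : Tup5) : Ordinal.{0} := v.2.1 ⊔ v.2.2.1 ⊔ v.2.2.2.1 ⊔ v.2.2.2.2

theorem Tup5.tailSup_lt_iff {v : Tup5} {β : Ordinal} :
    v.tailSup < β ↔ v.2.1 < β ∧ v.2.2.1 < β ∧ v.2.2.2.1 < β ∧ v.2.2.2.2 < β := by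
  simp only [tailSup, max_lt_iff, and_assoc]

theorem mem_levelSet_iff {J : Set Node} {α : Ordinal} {η : Node} :
    η ∈ levelSet J α ↔ η ∈ J ∧ ∃ β < α, ∀ i v, η i = some v → v.tailSup < β := by
  simp only [levelSet, mem_ofPred_eq, Tup5.tailSup_lt_iff]

theorem levelSet_mono (J : Set Node) : Monotone (levelSet J) :=
  fun _ _ hαβ _ ⟨hη, γ, hγ, h⟩ ↦ ⟨hη, γ, hγ.trans_le hαβ, h⟩

theorem eq_some_of_restrictNode_eq_some {η : Node} {s i : Ordinal} {v : Tup5}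
    (h : restrictNode η s i = some v) : η i = some v := by
  unfold restrictNode at h
  split_ifs at h
  exact h

theorem restrictNode_mem_levelSet {J : Set Node} (hclosed : ∀ η ∈ J, ∀ s, restrictNode η s ∈ J)
    {α : Ordinal} {η : Node} (hη : η ∈ levelSet J α) (s : Ordinal) :
    restrictNode η s ∈ levelSet J α :=
  ⟨hclosed η hη.1 s, hη.2.imp fun _ ⟨hβ, h⟩ ↦
    ⟨hβ, fun i v hv ↦ h i v (eq_some_of_restrictNode_eq_some hv)⟩⟩

theorem levelSet_eq_biUnion_of_isSuccLimit (J : Set Node) {α : Ordinal} (hα : IsSuccLimit α) :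
    levelSet J α = ⋃ β ∈ Iio α, levelSet J β := by
  refine subset_antisymm ?_ (iUnion₂_subset fun β hβ ↦ levelSet_mono J hβ.le)
  rintro η ⟨hη, β, hβ, h⟩
  exact mem_biUnion (hα.succ_lt hβ) ⟨hη, β, lt_succ β, h⟩

namespace IsGoodNode

variable {κ lam : Cardinal.{0}} {η : Node}

theorem lt_ord_of_eq_some (hη : IsGoodNode κ lam η) {i : Ordinal} {v : Tup5}
    (h : η i = some v) : i < lam.ord := by
  obtain ⟨s, hs, hdom⟩ := hη.1
  exact ((hdom i).1 (by simp [h])).trans_le hs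

theorem exists_tailSup_lt (hκ : κ.IsRegular) (hlt : lam < κ) (hη : IsGoodNode κ lam η) :
    ∃ β < κ.ord, ∀ i v, η i = some v → v.tailSup < β := by
  let f : Iio lam.ord → Ordinal.{0} := fun i ↦ (η i).elim 0 Tup5.tailSup
  have hf : ∀ i, f i < κ.ord := by
    intro i
    rcases hv : η i with _ | v
    · simpa [f, hv] using hκ.pos
    · simpa [f, hv, Tup5.tailSup_lt_iff] using (hη.2 i v hv).2
  have hcard : Cardinal.lift.{0} #(Iio lam.ord) < (Ordinal.lift.{1} κ.ord).cof := by
    rwa [Cardinal.mk_Iio_ordinal, ← Ordinal.lift_cof, hκ.cof_ord, card_ord, lift_lift, lift_lt]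
  refine ⟨⨆ i, f i + 1, Ordinal.lift_iSup_add_one_lt_of_lt_cof hcard hf, fun i v hv ↦ ?_⟩
  have hfi : f ⟨i, hη.lt_ord_of_eq_some hv⟩ = v.tailSup := by simp [f, hv]
  calc v.tailSup < v.tailSup + 1 := Order.lt_add_one_iff.2 le_rfl
    _ ≤ ⨆ j, f j + 1 := hfi ▸ Ordinal.le_iSup (fun j ↦ f j + 1) _

end IsGoodNode

theorem biUnion_Iio_ord_levelSet {κ lam : Cardinal.{0}} (hκ : κ.IsRegular) (hlt : lam < κ)
    {J : Set Node} (hJ : ∀ η ∈ J, IsGoodNode κ lam η) :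
    ⋃ α ∈ Iio κ.ord, levelSet J α = J := by
  refine subset_antisymm (iUnion₂_subset fun _ _ ↦ sep_subset _ _) fun η hη ↦ ?_
  obtain ⟨β, hβ, hbound⟩ := (hJ η hη).exists_tailSup_lt hκ hlt
  exact mem_biUnion ((isSuccLimit_ord hκ.aleph0_le).succ_lt hβ)
    (mem_levelSet_iff.2 ⟨hη, β, lt_succ β, hbound⟩)

theorem Cardinal.mk_le_two_power_of_forall_eq_some {X Y : Type u} (S : Set (X → Option Y))
    (A : Set X) (B : Set Y) (h : ∀ f ∈ S, ∀ x y, f x = some y → x ∈ A ∧ y ∈ B) :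
    #S ≤ 2 ^ (#A * #B) := by
  let graph : S → Set (A × B) := fun f ↦ {p | f.1 p.1 = some p.2}
  have hgraph : ∀ f g : S, graph f = graph g → ∀ x y, f.1 x = some y → g.1 x = some y := by
    intro f g hfg x y hf
    obtain ⟨hx, hy⟩ := h f f.2 x y hf
    have hmem : (⟨⟨x, hx⟩, ⟨y, hy⟩⟩ : A × B) ∈ graph f := hf
    rw [hfg] at hmem
    exact hmem
  have hinj : Function.Injective graph := fun f g hfg ↦ Subtype.ext <| funext fun x ↦
    Option.ext fun y ↦ ⟨hgraph f g hfg x y, hgraph g f hfg.symm x y⟩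
  simpa [mk_set, mk_prod] using mk_le_of_injective hinj

theorem mk_levelSet_lt {κ lam : Cardinal.{0}} (hκ : κ.IsStrongLimit) (hlt : lam < κ)
    {J : Set Node} (hJ : ∀ η ∈ J, IsGoodNode κ lam η) {α : Ordinal} (hα : α < κ.ord) :
    #(levelSet J α) < lift.{1} κ := by
  have hgraph : ∀ η ∈ levelSet J α, ∀ i v, η i = some v →
      i ∈ Iio lam.ord ∧ v ∈ Iio lam.ord ×ˢ Iio α ×ˢ Iio α ×ˢ Iio α ×ˢ Iio α := by
    rintro η ⟨hηJ, β, hβ, hbound⟩ i v hv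
    have hgood := hJ η hηJ
    obtain ⟨h2, h3, h4, h5⟩ := hbound i v hv
    exact ⟨hgood.lt_ord_of_eq_some hv, (hgood.2 i v hv).1, h2.trans hβ, h3.trans hβ,
      h4.trans hβ, h5.trans hβ⟩
  have hακ : α.card < κ := lt_ord.1 hα
  have hmul : ∀ {a b : Cardinal}, a < κ → b < κ → a * b < κ := mul_lt_of_lt hκ.aleph0_le
  have hprod : lam * (lam * (α.card * (α.card * (α.card * α.card)))) < κ :=
    hmul hlt (hmul hlt (hmul hακ (hmul hακ (hmul hακ hακ))))
  calc #(levelSet J α)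
      ≤ 2 ^ (#(Iio lam.ord) * #↥(Iio lam.ord ×ˢ Iio α ×ˢ Iio α ×ˢ Iio α ×ˢ Iio α)) :=
        mk_le_two_power_of_forall_eq_some _ _ _ hgraph
    _ = lift (2 ^ (lam * (lam * (α.card * (α.card * (α.card * α.card)))))) := by
        simp only [mk_setProd, mk_Iio_ordinal, card_ord, lift_mul, lift_two_power]
    _ < lift κ := lift_lt.2 (hκ.isStrongPrelimit hprod)

theorem stmt7_general (κ lam : Cardinal.{0}) (hκ : κ.IsInaccessible)
    (hlt : lam < κ)
    (J : Set Node) (hJ : ∀ η ∈ J, IsGoodNode κ lam η)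
    (hclosed : ∀ η ∈ J, ∀ s, restrictNode η s ∈ J) :
    (∀ α, ∀ η ∈ levelSet J α, ∀ s, restrictNode η s ∈ levelSet J α) ∧
    (⋃ α ∈ Set.Iio κ.ord, levelSet J α) = J ∧
    (∀ α β, α ≤ β → levelSet J α ⊆ levelSet J β) ∧
    (∀ α, Order.IsSuccLimit α → levelSet J α = ⋃ β ∈ Set.Iio α, levelSet J β) ∧
    (∀ α < κ.ord, Cardinal.mk ↥(levelSet J α) < Cardinal.lift.{1,0} κ) :=
  ⟨fun _ _ hη s ↦ restrictNode_mem_levelSet hclosed hη s,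
    biUnion_Iio_ord_levelSet hκ.isRegular hlt hJ,
    fun _ _ h ↦ levelSet_mono J h,
    fun _ ↦ levelSet_eq_biUnion_of_isSuccLimit J,
    fun _ ↦ mk_levelSet_lt hκ.isStrongLimit hlt hJ⟩

/-- for `κ` inaccessible, `λ < κ` uncountable, and any tree `J` of
nodes as in Definition 2.6 (a set of good nodes closed under restriction), the
family `(J^α)_{α<κ}` is a filtration of `J`: each `J^α` is downward closed, the
union over `α < κ` is `J`, the family is increasing and continuous at limits,
and each `J^α` has cardinality `< κ`. -/
theorem stmt7 (κ lam : Cardinal.{0}) (hκ : κ.IsInaccessible) (h0 : ℵ₀ < lam)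
    (hlt : lam < κ)
    (J : Set Node) (hJ : ∀ η ∈ J, IsGoodNode κ lam η)
    (hclosed : ∀ η ∈ J, ∀ s, restrictNode η s ∈ J) :
    (∀ α, ∀ η ∈ levelSet J α, ∀ s, restrictNode η s ∈ levelSet J α) ∧
    (⋃ α ∈ Set.Iio κ.ord, levelSet J α) = J ∧
    (∀ α β, α ≤ β → levelSet J α ⊆ levelSet J β) ∧
    (∀ α, Order.IsSuccLimit α → levelSet J α = ⋃ β ∈ Set.Iio α, levelSet J β) ∧
    (∀ α < κ.ord, Cardinal.mk ↥(levelSet J α) < Cardinal.lift.{1,0} κ) :=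
  stmt7_general κ lam hκ hlt J hJ hclosed
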